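/- Let H be a complex Hilbert space and let A, Y, V, P be bounded linear operators on H with: A self-adjoint; Y self-adjoint with ⟨ψ, Yψ⟩ ≥ 0 for all ψ ∈ H; V self-adjoint with ⟨ψ, Vψ⟩ ≥ 0 for all ψ ∈ H; and P an orthogonal projection (P self-adjoint with P² = P). Let s > 0 and E_s, E₁ ∈ ℝ with E₁ < E_s. Assume that Re⟨ψ, (A + sY)ψ⟩ ≥ E_s ‖ψ‖² for all ψ ∈ H, and that Re⟨Pφ, (A + V)Pφ⟩ ≤ E₁ ‖Pφ‖² for all φ ∈ H. Then Re⟨Pφ, Y Pφ⟩ ≥ ((E_s − E₁)/s) ‖Pφ‖² for all φ ∈ H; equivalently, P Y P ≥ ((E_s − E₁)/s) P in the sense of quadratic forms. -/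
import Mathlib


open scoped InnerProductSpace

theorem stmt9 {H : Type*} [NormedAddCommGroup H] [InnerProductSpace ℂ H]
    [CompleteSpace H]
    (A Y V P : H →L[ℂ] H)
    (hA : IsSelfAdjoint A)
    (hY : IsSelfAdjoint Y) (hYpos : ∀ ψ : H, 0 ≤ (⟪ψ, Y ψ⟫_ℂ).re)
    (hV : IsSelfAdjoint V) (hVpos : ∀ ψ : H, 0 ≤ (⟪ψ, V ψ⟫_ℂ).re)
    (hP : IsSelfAdjoint P) (hP2 : P ∘L P = P)
    (s : ℝ) (hs : 0 < s) (Es E₁ : ℝ) (hE : E₁ < Es)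
    (hAY : ∀ ψ : H, Es * ‖ψ‖ ^ 2 ≤ (⟪ψ, (A + (s : ℂ) • Y) ψ⟫_ℂ).re)
    (hPA : ∀ φ : H, (⟪P φ, (A + V) (P φ)⟫_ℂ).re ≤ E₁ * ‖P φ‖ ^ 2) :
    ∀ φ : H, ((Es - E₁) / s) * ‖P φ‖ ^ 2 ≤ (⟪P φ, Y (P φ)⟫_ℂ).re := by
  intro φ
  set ψ := P φ with hψ
  have h1 := hAY ψ
  have h2 := hPA φ
  have hVψ := hVpos ψ
  simp only [ContinuousLinearMap.add_apply, inner_add_right,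
    ContinuousLinearMap.smul_apply, inner_smul_right, Complex.add_re,
    Complex.mul_re, Complex.ofReal_re, Complex.ofReal_im] at h1 h2
  rw [div_mul_eq_mul_div, div_le_iff₀ hs]
  nlinarith
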